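/- For the Bott–Borel–Weil computation of higher direct images in the second-kind singular case (λ+ρ = [n−1, n−2, …, 1, 0]): every element w = 0d_1⋯d_{n−1} of the relative Hasse diagram (LS words of length n starting with 0) makes w(λ̃+ρ) regular for the Lagrangian parabolic, where λ̃+ρ = [0 | n−1, …, 1]; the number of adjacent transpositions needed to sort the resulting n-tuple (after dropping the bar) into strictly decreasing order equals the number of digits 0 among d_1, …, d_{n−1}; and the sorted result is the weight corresponding to the word d_1⋯d_{n−1}0 in the singular Hasse diagram. -/

import Mathlib

namespace Stmt19

/-- The action of the element of `W^p` with LS word `w` (on `n` coordinates, `true` = digit 1)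
on a coordinate tuple `μ`: the coordinates at positions with digit 1 are deleted, the
remaining coordinates are kept in order, and the negatives of the deleted coordinates are
appended at the end in reverse order. -/
def actWord {n : ℕ} (w : Fin n → Bool) (μ : Fin n → ℤ) : Fin n → ℤ := fun t =>
  if h : t.val < (Finset.univ.filter (fun i => w i = false)).card then
    μ ((Finset.univ.filter (fun i => w i = false)).orderEmbOfFin rfl ⟨t.val, h⟩)
  else
    -μ ((Finset.univ.filter (fun i => w i = true)).orderEmbOfFin rfl
        (Fin.rev ⟨t.val - (Finset.univ.filter (fun i => w i = false)).card, by
          have h1 := Finset.card_filter_add_card_filter_not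
            (s := (Finset.univ : Finset (Fin n))) (p := fun i => w i = false)
          simp only [Bool.not_eq_false, Finset.card_univ, Fintype.card_fin] at h1
          have h2 := t.isLt
          omega⟩))

/-!
The word `d₁⋯d_{n-1}0` is the rotation `d ∘ finRotate n` of `d = 0d₁⋯d_{n-1}`, and likewise
`λ + ρ = (λ̃ + ρ) ∘ finRotate n`. A word only rearranges the values `μ i` (kept at its zeros,
negated at its ones), so both weights have the same set of coordinates. Because `λ + ρ` is
strictly decreasing and nonnegative with positive entries at the ones, `(d₁⋯d_{n-1}0)(λ + ρ)` is
strictly decreasing; hence `d(λ̃ + ρ)` is a permutation of it, in particular regular. The same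
monotonicity argument shows that `d(λ̃ + ρ)` is strictly decreasing away from its first coordinate
`0`, so its inversions are the pairs `(0, t)` with a positive coordinate at `t`, one for each zero
digit of `d` after the first.
-/

open Finset Function

theorem exists_perm_eq_comp_of_range_subset {α β : Type*} [Finite α] {f g : α → β}
    (hf : Injective f) (h : Set.range f ⊆ Set.range g) : ∃ σ : Equiv.Perm α, f = g ∘ σ := by
  choose σ hσ using fun a => h ⟨a, rfl⟩
  have hσ_inj : Injective σ := fun a b hab => hf (by rw [← hσ a, ← hσ b, hab])
  exact ⟨.ofBijective σ (Finite.injective_iff_bijective.1 hσ_inj), funext fun a => (hσ a).symm⟩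

theorem card_inversions_of_strictAntiOn {α : Type*} [LinearOrder α] {m : ℕ} (f : Fin (m + 1) → α)
    (hf : StrictAntiOn f {t | t ≠ 0}) :
    #{p : Fin (m + 1) × Fin (m + 1) | p.1 < p.2 ∧ f p.1 < f p.2} = #{t | f 0 < f t} := by
  suffices h : ({p : Fin (m + 1) × Fin (m + 1) | p.1 < p.2 ∧ f p.1 < f p.2} : Finset _) =
      ({t | f 0 < f t} : Finset _).image (fun t => (0, t)) by
    rw [h, card_image_of_injective _ fun a b hab => (Prod.ext_iff.1 hab).2]
  ext ⟨a, b⟩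
  simp only [mem_filter, mem_univ, true_and, mem_image, Prod.mk.injEq]
  constructor
  · rintro ⟨hab, hf_lt⟩
    obtain rfl : a = 0 := by
      by_contra ha
      exact (hf ha (ne_bot_of_gt hab) hab).not_gt hf_lt
    exact ⟨b, hf_lt, rfl, rfl⟩
  · rintro ⟨t, ht, rfl, rfl⟩
    exact ⟨lt_of_le_of_ne (Fin.zero_le t) (by rintro rfl; exact ht.false), ht⟩

theorem val_le_val_of_strictMono {k n : ℕ} {f : Fin k → Fin n} (hf : StrictMono f) (i : Fin k) :
    (i : ℕ) ≤ f i := by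
  obtain ⟨i, hi⟩ := i
  induction i with
  | zero => exact Nat.zero_le _
  | succ j ih =>
    have h_lt := hf (show (⟨j, by omega⟩ : Fin k) < ⟨j + 1, hi⟩ from Fin.mk_lt_mk.2 (by omega))
    have h_le := ih (by omega)
    rw [Fin.lt_def] at h_lt
    simp only at h_le ⊢
    omega

section ActWord

variable {n : ℕ} (w : Fin n → Bool) (μ : Fin n → ℤ)

def numZeros : ℕ := #{i | w i = false}

def numOnes : ℕ := #{i | w i = true}

noncomputable def zerosEmb : Fin (numZeros w) ↪o Fin n :=
  ({i | w i = false} : Finset (Fin n)).orderEmbOfFin rfl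

noncomputable def onesEmb : Fin (numOnes w) ↪o Fin n :=
  ({i | w i = true} : Finset (Fin n)).orderEmbOfFin rfl

theorem numZeros_add_numOnes : numZeros w + numOnes w = n := by
  unfold numZeros numOnes
  have h :=
    card_filter_add_card_filter_not (s := (univ : Finset (Fin n))) (p := fun i => w i = false)
  simpa only [Bool.not_eq_false, card_univ, Fintype.card_fin] using h

variable {w}

theorem zerosEmb_apply_eq_false (j : Fin (numZeros w)) : w (zerosEmb w j) = false :=
  (mem_filter.1 (orderEmbOfFin_mem _ rfl j)).2

theorem onesEmb_apply_eq_true (j : Fin (numOnes w)) : w (onesEmb w j) = true :=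
  (mem_filter.1 (orderEmbOfFin_mem _ rfl j)).2

theorem exists_zerosEmb_eq {i : Fin n} (hi : w i = false) : ∃ j, zerosEmb w j = i := by
  have : i ∈ (({i | w i = false} : Finset (Fin n)) : Set (Fin n)) := by simp [hi]
  rwa [← range_orderEmbOfFin _ rfl] at this

theorem exists_onesEmb_eq {i : Fin n} (hi : w i = true) : ∃ j, onesEmb w j = i := by
  have : i ∈ (({i | w i = true} : Finset (Fin n)) : Set (Fin n)) := by simp [hi]
  rwa [← range_orderEmbOfFin _ rfl] at this

theorem actWord_of_val_eq {t : Fin n} {j : Fin (numZeros w)} (h : (t : ℕ) = j) :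
    actWord w μ t = μ (zerosEmb w j) := by
  rw [actWord, dif_pos (h ▸ j.isLt)]
  exact congrArg (μ ∘ zerosEmb w) (Fin.ext h)

theorem actWord_of_val_eq_numZeros_add {t : Fin n} {j : Fin (numOnes w)}
    (h : (t : ℕ) = numZeros w + j) : actWord w μ t = -μ (onesEmb w j.rev) := by
  rw [actWord, dif_neg (by unfold numZeros at h; omega)]
  exact congrArg (fun j => -μ (onesEmb w (Fin.rev j))) (Fin.ext (by unfold numZeros at h; simp [h]))

theorem actWord_cases (t : Fin n) :
    (∃ j : Fin (numZeros w), (t : ℕ) = j ∧ actWord w μ t = μ (zerosEmb w j)) ∨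
      ∃ j : Fin (numOnes w), (t : ℕ) = numZeros w + j ∧ actWord w μ t = -μ (onesEmb w j.rev) := by
  by_cases ht : (t : ℕ) < numZeros w
  · exact .inl ⟨⟨t, ht⟩, rfl, actWord_of_val_eq μ rfl⟩
  · have hj : (t : ℕ) - numZeros w < numOnes w := by have := numZeros_add_numOnes w; omega
    exact .inr ⟨⟨t - numZeros w, hj⟩, by simp only; omega,
      actWord_of_val_eq_numZeros_add μ (by simp only; omega)⟩

theorem mem_range_actWord {x : ℤ} :
    x ∈ Set.range (actWord w μ) ↔ (∃ i, w i = false ∧ μ i = x) ∨ ∃ i, w i = true ∧ -μ i = x := by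
  constructor
  · rintro ⟨t, rfl⟩
    rcases actWord_cases μ t with ⟨j, -, h⟩ | ⟨j, -, h⟩
    · exact .inl ⟨_, zerosEmb_apply_eq_false j, h.symm⟩
    · exact .inr ⟨_, onesEmb_apply_eq_true j.rev, h.symm⟩
  · have hn := numZeros_add_numOnes w
    rintro (⟨i, hi, rfl⟩ | ⟨i, hi, rfl⟩)
    · obtain ⟨j, rfl⟩ := exists_zerosEmb_eq hi
      exact ⟨⟨j, by omega⟩, actWord_of_val_eq μ rfl⟩
    · obtain ⟨j, rfl⟩ := exists_onesEmb_eq hi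
      refine ⟨⟨numZeros w + j.rev, by omega⟩, ?_⟩
      rw [actWord_of_val_eq_numZeros_add μ rfl, Fin.rev_rev]

variable (w) in
theorem range_actWord_comp (e : Equiv.Perm (Fin n)) :
    Set.range (actWord (w ∘ e) (μ ∘ e)) = Set.range (actWord w μ) := by
  ext x
  simp only [mem_range_actWord, comp_apply]
  exact or_congr (e.surjective.exists (p := fun i => w i = false ∧ μ i = x)).symm
    (e.surjective.exists (p := fun i => w i = true ∧ -μ i = x)).symm

theorem actWord_strictAntiOn (c : ℕ) (hw : ∀ i : Fin n, (i : ℕ) < c → w i = false)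
    (hμ : StrictAntiOn μ {i | c ≤ (i : ℕ)}) (h0 : ∀ i, w i = false → 0 ≤ μ i)
    (h1 : ∀ i, w i = true → 0 < μ i) : StrictAntiOn (actWord w μ) {t | c ≤ (t : ℕ)} := by
  have hones (j : Fin (numOnes w)) : c ≤ (onesEmb w j : ℕ) :=
    not_lt.1 fun h => by simpa [hw _ h] using onesEmb_apply_eq_true j
  intro a ha b hb hab
  rw [Set.mem_ofPred_eq] at ha hb
  rw [Fin.lt_def] at hab
  rcases actWord_cases μ a with ⟨i, hai, ha'⟩ | ⟨i, hai, ha'⟩ <;>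
    rcases actWord_cases μ b with ⟨j, hbj, hb'⟩ | ⟨j, hbj, hb'⟩ <;> rw [ha', hb']
  · have hij : i < j := Fin.lt_def.2 (by omega)
    exact hμ (ha.trans (hai ▸ val_le_val_of_strictMono (zerosEmb w).strictMono i))
      (hb.trans (hbj ▸ val_le_val_of_strictMono (zerosEmb w).strictMono j))
      ((zerosEmb w).strictMono hij)
  · linarith [h0 _ (zerosEmb_apply_eq_false i), h1 _ (onesEmb_apply_eq_true j.rev)]
  · omega
  · have hij : j.rev < i.rev := Fin.rev_lt_rev.2 (Fin.lt_def.2 (by omega))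
    exact neg_lt_neg (hμ (hones _) (hones _) ((onesEmb w).strictMono hij))

theorem card_filter_pos_actWord (h1 : ∀ i, w i = true → 0 < μ i) :
    #{t | 0 < actWord w μ t} = #{i | w i = false ∧ 0 < μ i} := by
  set s : Finset (Fin (numZeros w)) := {j | 0 < μ (zerosEmb w j)}
  have hk : numZeros w ≤ n := by have := numZeros_add_numOnes w; omega
  calc #{t | 0 < actWord w μ t}
      = #(s.map (Fin.castLEEmb hk)) := by
        congr 1
        ext t
        simp only [s, mem_filter, mem_univ, true_and, mem_map, Fin.castLEEmb_apply]
        constructor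
        · rcases actWord_cases μ t with ⟨j, htj, h⟩ | ⟨j, -, h⟩ <;> rw [h] <;> intro ht
          · exact ⟨j, ht, Fin.ext htj.symm⟩
          · linarith [h1 _ (onesEmb_apply_eq_true j.rev)]
        · rintro ⟨j, hj, rfl⟩
          rwa [actWord_of_val_eq μ (Fin.val_castLE hk j)]
    _ = #(s.map (zerosEmb w).toEmbedding) := by rw [card_map, card_map]
    _ = #{i | w i = false ∧ 0 < μ i} := by
        congr 1
        ext i
        simp only [s, mem_filter, mem_univ, true_and, mem_map, RelEmbedding.coe_toEmbedding]
        constructor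
        · rintro ⟨j, hj, rfl⟩
          exact ⟨zerosEmb_apply_eq_false j, hj⟩
        · rintro ⟨hi, hμi⟩
          obtain ⟨j, rfl⟩ := exists_zerosEmb_eq hi
          exact ⟨j, hμi, rfl⟩

end ActWord

theorem actWord_zero {m : ℕ} {w : Fin (m + 1) → Bool} (μ : Fin (m + 1) → ℤ) (hw : w 0 = false) :
    actWord w μ 0 = μ 0 := by
  have hk : 0 < numZeros w := card_pos.2 ⟨0, by simp [hw]⟩
  obtain ⟨j, hj⟩ := exists_zerosEmb_eq hw
  rw [actWord_of_val_eq μ (j := ⟨0, hk⟩) rfl]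
  exact congrArg μ (le_antisymm (hj ▸ (zerosEmb w).monotone (Fin.mk_le_mk.2 j.val.zero_le))
    (Fin.zero_le _))

theorem comp_finRotate_eq {β : Type*} {m : ℕ} (f : Fin (m + 1) → β) :
    f ∘ finRotate (m + 1) =
      fun t : Fin (m + 1) => if h : (t : ℕ) + 1 < m + 1 then f ⟨t + 1, h⟩ else f 0 := by
  funext t
  rw [comp_apply]
  split_ifs with h
  · exact congrArg f (Fin.ext (coe_finRotate_of_ne_last (Fin.ne_of_val_ne (by simp; omega))))
  · rw [show t = Fin.last m from Fin.ext (by simp; omega), finRotate_last]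

-- With `n = m + 1`: `λ + ρ = [n-1, …, 1, 0]` and `λ̃ + ρ = [0 | n-1, …, 1]`.
def lambdaRho (m : ℕ) : Fin (m + 1) → ℤ := fun t => (m : ℤ) - t

def lambdaTildeRho (m : ℕ) : Fin (m + 1) → ℤ := fun t =>
  if t.val = 0 then 0 else ((m + 1 : ℕ) : ℤ) - t.val

section SecondKind

variable {m : ℕ}

theorem lambdaRho_eq_comp_finRotate : lambdaRho m = lambdaTildeRho m ∘ finRotate (m + 1) := by
  rw [comp_finRotate_eq]
  funext t
  simp only [lambdaRho, lambdaTildeRho]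
  split_ifs <;> first | omega | simp_all

theorem lambdaTildeRho_pos_iff (i : Fin (m + 1)) : 0 < lambdaTildeRho m i ↔ 1 ≤ (i : ℕ) := by
  have := i.isLt
  simp only [lambdaTildeRho]
  split_ifs <;> omega

theorem lambdaTildeRho_nonneg (i : Fin (m + 1)) : 0 ≤ lambdaTildeRho m i := by
  have := i.isLt
  simp only [lambdaTildeRho]
  split_ifs <;> omega

theorem lambdaTildeRho_strictAntiOn : StrictAntiOn (lambdaTildeRho m) {i | 1 ≤ (i : ℕ)} := by
  intro a ha b hb hab
  rw [Set.mem_ofPred_eq] at ha hb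
  rw [Fin.lt_def] at hab
  simp only [lambdaTildeRho, if_neg (show (a : ℕ) ≠ 0 by omega), if_neg (show (b : ℕ) ≠ 0 by omega)]
  omega

variable {w : Fin (m + 1) → Bool}

theorem lambdaTildeRho_pos_of_eq_true (hw : w 0 = false) {i : Fin (m + 1)} (hi : w i = true) :
    0 < lambdaTildeRho m i :=
  (lambdaTildeRho_pos_iff i).2 (Nat.one_le_iff_ne_zero.2 fun h0 => by
    simp [show i = 0 from Fin.ext h0, hw] at hi)

theorem strictAnti_actWord_comp_finRotate (hw : w 0 = false) :
    StrictAnti (actWord (w ∘ finRotate (m + 1)) (lambdaRho m)) := by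
  have hμ : StrictAntiOn (lambdaRho m) {i | 0 ≤ (i : ℕ)} := fun a _ b _ hab => by
    simpa [lambdaRho] using hab
  have h := actWord_strictAntiOn (lambdaRho m) 0 (by simp) hμ
    (fun i _ => by simp only [lambdaRho]; omega)
    (fun i hi => by rw [lambdaRho_eq_comp_finRotate]; exact lambdaTildeRho_pos_of_eq_true hw hi)
  exact strictAntiOn_univ.1 (h.mono fun t _ => Nat.zero_le t)

theorem card_inversions_actWord_lambdaTildeRho (hw : w 0 = false) :
    #{p : Fin (m + 1) × Fin (m + 1) |
        p.1 < p.2 ∧ actWord w (lambdaTildeRho m) p.1 < actWord w (lambdaTildeRho m) p.2} =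
      #{t : Fin (m + 1) | 1 ≤ (t : ℕ) ∧ w t = false} := by
  have h := actWord_strictAntiOn (lambdaTildeRho m) 1
    (fun i hi => by rwa [show i = 0 from Fin.ext (by rw [Fin.val_zero]; omega)])
    lambdaTildeRho_strictAntiOn (fun i _ => lambdaTildeRho_nonneg i)
    (fun _ => lambdaTildeRho_pos_of_eq_true hw)
  rw [card_inversions_of_strictAntiOn _
      (h.mono fun t ht => Nat.one_le_iff_ne_zero.2 (Fin.val_ne_zero_iff.2 ht)),
    actWord_zero _ hw, show lambdaTildeRho m 0 = 0 from if_pos rfl,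
    card_filter_pos_actWord _ fun _ => lambdaTildeRho_pos_of_eq_true hw]
  exact congrArg card (filter_congr fun i _ => by rw [lambdaTildeRho_pos_iff, and_comm])

end SecondKind

/-- Bott–Borel–Weil in the second-kind singular case, `λ + ρ = [n-1, …, 1, 0]` and
`λ̃ + ρ = [0 | n-1, …, 1]`.  Every element `w = 0d_1⋯d_{n-1}` of the relative Hasse diagram
makes `w(λ̃+ρ)` regular for the Lagrangian parabolic (all coordinates distinct); the number
of adjacent transpositions needed to sort the resulting tuple into strictly decreasing
order (its number of inversions) equals the number of digits `0` among `d_1, …, d_{n-1}`;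
and the sorted result is the weight attached to the word `d_1⋯d_{n-1}0` of the singular
Hasse diagram, i.e. `(d_1⋯d_{n-1}0)(λ+ρ)`. -/
theorem bott_borel_weil_second_kind (n : ℕ) (hn : 1 ≤ n) (d : Fin n → Bool)
    (hd : d ⟨0, by omega⟩ = false)
    (μt : Fin n → ℤ) (hμt : ∀ t : Fin n, μt t = if t.val = 0 then 0 else (n : ℤ) - t.val)
    (μ : Fin n → ℤ) (hμ : ∀ t : Fin n, μ t = (n : ℤ) - 1 - t.val)
    (d' : Fin n → Bool)
    (hd' : ∀ t : Fin n, d' t = if h : t.val + 1 < n then d ⟨t.val + 1, h⟩ else false) :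
    Function.Injective (actWord d μt) ∧
    (Finset.univ.filter (fun p : Fin n × Fin n =>
        p.1 < p.2 ∧ actWord d μt p.1 < actWord d μt p.2)).card
      = (Finset.univ.filter (fun t : Fin n => 1 ≤ t.val ∧ d t = false)).card ∧
    StrictAnti (actWord d' μ) ∧
    ∃ σ : Equiv.Perm (Fin n), actWord d' μ = actWord d μt ∘ σ := by
  obtain ⟨m, rfl⟩ := Nat.exists_eq_add_of_le' hn
  replace hd : d 0 = false := hd
  obtain rfl : μt = lambdaTildeRho m := funext hμt
  obtain rfl : μ = lambdaRho m := funext fun t => by rw [hμ, lambdaRho]; push_cast; ring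
  obtain rfl : d' = d ∘ finRotate (m + 1) := by
    rw [comp_finRotate_eq]
    funext t
    rw [hd' t]
    split_ifs <;> simp [hd]
  have hanti := strictAnti_actWord_comp_finRotate hd
  obtain ⟨σ, hσ⟩ := exists_perm_eq_comp_of_range_subset (g := actWord d (lambdaTildeRho m))
    hanti.injective (by rw [lambdaRho_eq_comp_finRotate, range_actWord_comp])
  exact ⟨(σ.injective_comp _).1 (hσ ▸ hanti.injective), card_inversions_actWord_lambdaTildeRho hd,
    hanti, σ, hσ⟩

end Stmt19
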